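/- Let z = (z_1, …, z_s) be pairwise distinct complex numbers with |z_j| = 1, let m ≥ 1 and k ≥ 0 be integers, and let N be an integer with (2s−1)m + k ≤ 2N. Let ξ_j ∈ (−π, π] be such that z_j = exp(i ξ_j), and let U_{N,R_k} be the 2s × 2s submatrix of U_N(ξ) consisting of the rows indexed by R_k = {k, m+k, 2m+k, …, (2s−1)m+k}. Then U_{N,R_k} = (1/√(2N)) · 𝐔_{2s}(ν) · D(z, m) · T(z, k), where ν = (z_1^m, …, z_s^m), D(z, m) = diag(1, …, 1, m·z_1^{m−1}, …, m·z_s^{m−1}), and T(z, k) is the 2s × 2s block matrix [[diag(z_1^k, …, z_s^k), diag(k·z_1^{k−1}, …, k·z_s^{k−1})], [0, diag(z_1^k, …, z_s^k)]]. -/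

import Mathlib

/-!
Row `a * m + k` of `U_N(ξ)` holds `z ^ (a * m + k) = (z ^ m) ^ a * z ^ k` and its derivative in `z`.
The first factor `ν ^ a` is row `a` of `𝐔_{2s}(ν)`, and by the product and chain rules the derivative
splits as `(z ^ m) ^ a * (k z ^ (k - 1)) + a ν ^ (a - 1) * (m z ^ (m - 1)) * z ^ k`, which is exactly
how `D(z, m)` and the upper triangular block matrix `T(z, k)` act on the columns.
-/

open scoped BigOperators

/-- The discrete ℓ² norm of a vector. -/
noncomputable def l2norm {n : Type*} [Fintype n] (v : n → ℂ) : ℝ :=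
  Real.sqrt (∑ i, ‖v i‖ ^ 2)

/-- The smallest singular value of a matrix: the infimum of `‖A v‖₂` over unit vectors `v`. -/
noncomputable def sigmaMin {m n : Type*} [Fintype m] [Fintype n] (A : Matrix m n ℂ) : ℝ :=
  sInf {x : ℝ | ∃ v : n → ℂ, l2norm v = 1 ∧ x = l2norm (A.mulVec v)}

/-- Wraparound distance: the absolute value of the representative of `t` in `(-π, π]`. -/
noncomputable def wrapDist (t : ℝ) : ℝ := |Complex.arg (Complex.exp ((t : ℂ) * Complex.I))|

/-- A `(Δ, ρ, s, ℓ, τ)`-clustered configuration of pairwise distinct nodes in `(-π/2, π/2]`. -/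
def IsClustered {s : ℕ} (x : Fin s → ℝ) (Δ ρ : ℝ) (ℓ : ℕ) (τ : ℝ) : Prop :=
  Function.Injective x ∧ (∀ j, x j ∈ Set.Ioc (-(Real.pi / 2)) (Real.pi / 2)) ∧
  ∀ j : Fin s, ∃ S : Finset (Fin s), j ∈ S ∧ S.card ≤ ℓ ∧
    (∀ k ∈ S, k ≠ j → Δ ≤ wrapDist (x k - x j) ∧ wrapDist (x k - x j) ≤ τ * Δ) ∧
    (∀ k : Fin s, k ∉ S → ρ ≤ wrapDist (x k - x j))

/-- The rectangular `(2N+1) × 2s` confluent Vandermonde matrix `U_N(ξ)` with nodes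
`z_j = exp(i ξ_j)`: rows `k = 0, …, 2N`, with `(1/√(2N)) z_j^k` in column `j`
and `(1/√(2N)) k z_j^{k-1}` in column `s + j`. -/
noncomputable def confVan (N s : ℕ) (ξ : Fin s → ℝ) :
    Matrix (Fin (2 * N + 1)) (Fin s ⊕ Fin s) ℂ :=
  fun k => Sum.elim
    (fun j => ((1 / Real.sqrt (2 * N) : ℝ) : ℂ) * Complex.exp (Complex.I * (ξ j : ℂ)) ^ (k : ℕ))
    (fun j => ((1 / Real.sqrt (2 * N) : ℝ) : ℂ) * ((k : ℕ) : ℂ) *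
      Complex.exp (Complex.I * (ξ j : ℂ)) ^ ((k : ℕ) - 1))

/-- The square `2s × 2s` confluent Vandermonde matrix: rows `k = 0, …, 2s-1`, with `ν_j^k`
in column `j` and `k ν_j^{k-1}` in column `s + j`. -/
noncomputable def Usq (s : ℕ) (ν : Fin s → ℂ) : Matrix (Fin (2 * s)) (Fin s ⊕ Fin s) ℂ :=
  fun k => Sum.elim (fun j => ν j ^ (k : ℕ)) (fun j => ((k : ℕ) : ℂ) * ν j ^ ((k : ℕ) - 1))

open Matrix Polynomial

theorem natCast_mul_pow_sub_one_eq_derivative {R : Type*} [CommSemiring R] (z : R) (a m k : ℕ) :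
    ((a * m + k : ℕ) : R) * z ^ (a * m + k - 1) =
      (z ^ m) ^ a * (k * z ^ (k - 1)) + a * (z ^ m) ^ (a - 1) * (m * z ^ (m - 1) * z ^ k) := by
  have h := congrArg (eval z ∘ derivative) (show (X ^ (a * m + k) : R[X]) = (X ^ m) ^ a * X ^ k by
    rw [pow_add, pow_mul'])
  simp only [Function.comp_apply, derivative_mul, derivative_pow, derivative_X, mul_one,
    eval_add, eval_mul, eval_pow, eval_X, eval_C] at h
  rw [h]; ring

section UsqProduct

variable {s : ℕ} (ν w p q : Fin s → ℂ) (i : Fin (2 * s)) (j : Fin s)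

theorem Usq_mul_diagonal_mul_fromBlocks_apply_inl :
    (Usq s ν * (diagonal (Sum.elim (fun _ : Fin s => (1 : ℂ)) w) *
      fromBlocks (diagonal p) (diagonal q) 0 (diagonal p))) i (Sum.inl j) =
      ν j ^ (i : ℕ) * p j := by
  simp [Usq, mul_apply, Fintype.sum_sum_type, diagonal_apply]

theorem Usq_mul_diagonal_mul_fromBlocks_apply_inr :
    (Usq s ν * (diagonal (Sum.elim (fun _ : Fin s => (1 : ℂ)) w) *
      fromBlocks (diagonal p) (diagonal q) 0 (diagonal p))) i (Sum.inr j) =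
      ν j ^ (i : ℕ) * q j + (i : ℕ) * ν j ^ ((i : ℕ) - 1) * (w j * p j) := by
  simp [Usq, mul_apply, Fintype.sum_sum_type, diagonal_apply]

end UsqProduct

/-- Lemma (decimated block factorization): the submatrix `U_{N,R_k}` of `U_N(ξ)` consisting of
the rows `{k, m+k, …, (2s-1)m+k}` factors as
`(1/√(2N)) 𝐔_{2s}(ν) D(z, m) T(z, k)` with `ν_j = z_j^m`. -/
theorem decimated_submatrix_factorization
    (N s m k : ℕ)
    (ξ : Fin s → ℝ)
    (z : Fin s → ℂ) (hz : ∀ j, z j = Complex.exp (Complex.I * (ξ j : ℂ)))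
    (hNk : (2 * s - 1) * m + k ≤ 2 * N) :
    (confVan N s ξ).submatrix
        (fun i : Fin (2 * s) => (⟨(i : ℕ) * m + k, by
          have h1 : (i : ℕ) ≤ 2 * s - 1 := Nat.le_sub_one_of_lt i.2
          have h2 : (i : ℕ) * m ≤ (2 * s - 1) * m := Nat.mul_le_mul_right m h1
          omega⟩ : Fin (2 * N + 1)))
        id =
      ((1 / Real.sqrt (2 * N) : ℝ) : ℂ) •
        (Usq s (fun j => z j ^ m) *
          (Matrix.diagonal (Sum.elim (fun _ : Fin s => (1 : ℂ))
              (fun j : Fin s => (m : ℂ) * z j ^ (m - 1))) *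
            Matrix.fromBlocks
              (Matrix.diagonal fun j => z j ^ k)
              (Matrix.diagonal fun j => (k : ℂ) * z j ^ (k - 1))
              0
              (Matrix.diagonal fun j => z j ^ k))) := by
  ext i (j | j)
  · simp only [Matrix.submatrix_apply, id_eq, Matrix.smul_apply,
      Usq_mul_diagonal_mul_fromBlocks_apply_inl, confVan, Sum.elim_inl, ← hz, smul_eq_mul]
    rw [pow_add, pow_mul']
  · simp only [Matrix.submatrix_apply, id_eq, Matrix.smul_apply,
      Usq_mul_diagonal_mul_fromBlocks_apply_inr, confVan, Sum.elim_inr, ← hz, smul_eq_mul]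
    rw [mul_assoc, natCast_mul_pow_sub_one_eq_derivative]
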